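/- Let G be a connected interval graph without an apex and let M be a max clique of G. Then the following are equivalent: (1) ≺_M is asymmetric; (2) ≺_M is a strict weak order (irreflexive, transitive, and incomparability with respect to ≺_M is an equivalence relation on M_G); (3) M is a possible end of G. -/

import Mathlib

/-- `lo, hi` is an interval representation of the (finite simple) graph `G`: each
vertex `v` is assigned the closed interval `[lo v, hi v] ⊆ ℕ`, and distinct vertices
are adjacent iff their intervals intersect. -/
def IsIntervalRep {V : Type} (G : SimpleGraph V) (lo hi : V → ℕ) : Prop :=
  (∀ v : V, lo v ≤ hi v) ∧
  ∀ u v : V, u ≠ v →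
    (G.Adj u v ↔ (Set.Icc (lo u) (hi u) ∩ Set.Icc (lo v) (hi v)).Nonempty)

/-- A graph is an interval graph if it has an interval representation. -/
def IsIntervalGraph {V : Type} (G : SimpleGraph V) : Prop :=
  ∃ lo hi : V → ℕ, IsIntervalRep G lo hi

/-- A max clique: an inclusion-maximal clique. -/
def IsMaxClique {V : Type} (G : SimpleGraph V) (s : Set V) : Prop :=
  G.IsClique s ∧ ∀ t : Set V, G.IsClique t → s ⊆ t → t = s

/-- An apex of a graph: a vertex adjacent to all other vertices. -/
def HasApex {V : Type} (G : SimpleGraph V) : Prop :=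
  ∃ v : V, ∀ u : V, u ≠ v → G.Adj v u

/-- `≺_M`: the smallest binary relation on the max cliques of `G` such that
(i) `M ≺_M C` for every max clique `C ≠ M`;
(ii) `C ≺_M D` whenever `C` is a max clique and there is `E` with `E ≺_M D` and
`(E ∩ C) ∖ D ≠ ∅`; and
(iii) `C ≺_M D` whenever `D` is a max clique and there is `E` with `C ≺_M E` and
`(E ∩ D) ∖ C ≠ ∅`. -/
inductive PrecM {V : Type} (G : SimpleGraph V) (M : Set V) : Set V → Set V → Prop
  | init (C : Set V) : IsMaxClique G C → C ≠ M → PrecM G M M C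
  | ext_left (C D E : Set V) : IsMaxClique G C → PrecM G M E D →
      ((E ∩ C) \ D).Nonempty → PrecM G M C D
  | ext_right (C D E : Set V) : IsMaxClique G D → PrecM G M C E →
      ((E ∩ D) \ C).Nonempty → PrecM G M C D

/-- A minimal interval representation: one for which the number of points of
`⋃_v I_v ⊆ ℕ` is minimum among all interval representations of `G`. -/
def IsMinimalRep {V : Type} (G : SimpleGraph V) (lo hi : V → ℕ) : Prop :=
  IsIntervalRep G lo hi ∧
  ∀ lo' hi' : V → ℕ, IsIntervalRep G lo' hi' →
    (⋃ v : V, Set.Icc (lo v) (hi v)).ncard ≤ (⋃ v : V, Set.Icc (lo' v) (hi' v)).ncard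

/-- `M` is a possible end of `G`: there is a minimal interval representation of `G`
under whose induced order on max cliques `M` is least, i.e. `M` is the max clique
consisting of the intervals containing the leftmost point `k` of the representation. -/
def PossibleEnd {V : Type} (G : SimpleGraph V) (M : Set V) : Prop :=
  ∃ lo hi : V → ℕ, IsMinimalRep G lo hi ∧
    ∃ k : ℕ, (∀ v : V, k ≤ lo v) ∧ M = {v : V | k ∈ Set.Icc (lo v) (hi v)}


/-!
Everything rests on a weak linearity of `≺_M`: if `C ≺_M E`, then `C ≺_M D` or `D ≺_M E` for
every max clique `D` (induction on the derivation of `C ≺_M E`). It makes `≺_M`-incomparability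
transitive, and `≺_M` itself transitive as soon as it is asymmetric; this gives (1) ⇔ (2).

In an interval representation every max clique `C` has a leftmost common point `p C` of its
intervals, and distinct max cliques have distinct such points. If `M` consists of the intervals
through the leftmost point of the representation, every rule generating `≺_M` preserves
`p C < p D`, so `≺_M` is asymmetric. Conversely, if `≺_M` is asymmetric, sort the max cliques by
their number of `≺_M`-predecessors and break ties by `p`. The max cliques containing a given
vertex are then consecutive, so numbering them `0, 1, …` yields a representation with one point
per max clique, hence minimal, in which `M` sits at the leftmost point `0`.
-/

open Set

variable {V : Type} {G : SimpleGraph V}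

section MaxClique

variable {s C D : Set V}

lemma isMaxClique_iff_maximal : IsMaxClique G s ↔ Maximal G.IsClique s :=
  ⟨fun h => ⟨h.1, fun _ ht hst => (h.2 _ ht hst).le⟩,
    fun h => ⟨h.1, fun _ ht hst => (h.2 ht hst).antisymm hst⟩⟩

lemma IsMaxClique.nonempty [Nonempty V] (hC : IsMaxClique G C) : C.Nonempty := by
  obtain ⟨v⟩ := ‹Nonempty V›
  rw [nonempty_iff_ne_empty]
  rintro rfl
  exact singleton_ne_empty v (hC.2 {v} (G.isClique_singleton v) (empty_subset _))

lemma IsMaxClique.eq_of_subset (hC : IsMaxClique G C) (hD : IsMaxClique G D) (h : C ⊆ D) :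
    C = D :=
  (hC.2 D hD.1 h).symm

lemma IsMaxClique.mem_of_forall_adj {v : V} (hC : IsMaxClique G C)
    (h : ∀ u ∈ C, v ≠ u → G.Adj v u) : v ∈ C :=
  hC.2 _ (hC.1.insert h) (subset_insert v C) ▸ mem_insert v C

lemma exists_isMaxClique_superset [Finite V] (hs : G.IsClique s) :
    ∃ C, IsMaxClique G C ∧ s ⊆ C := by
  obtain ⟨C, hsC, hC⟩ := Finite.exists_le_maximal hs
  exact ⟨C, isMaxClique_iff_maximal.2 hC, hsC⟩

lemma exists_isMaxClique_mem [Finite V] (v : V) : ∃ C, IsMaxClique G C ∧ v ∈ C := by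
  obtain ⟨C, hC, hvC⟩ := exists_isMaxClique_superset (G.isClique_singleton v)
  exact ⟨C, hC, hvC rfl⟩

lemma SimpleGraph.Adj.exists_isMaxClique [Finite V] {u v : V} (h : G.Adj u v) :
    ∃ C, IsMaxClique G C ∧ u ∈ C ∧ v ∈ C := by
  obtain ⟨C, hC, huvC⟩ := exists_isMaxClique_superset (G.isClique_pair.2 fun _ => h)
  exact ⟨C, hC, huvC (mem_insert u _), huvC (mem_insert_of_mem u rfl)⟩

end MaxClique

/-- In an interval representation `lo, hi`, the largest left endpoint in a clique `C` is the
leftmost point common to all intervals of `C`. -/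
noncomputable def cliquePoint (lo : V → ℕ) (C : Set V) : ℕ := sSup (lo '' C)

lemma exists_lo_eq_cliquePoint [Finite V] {lo : V → ℕ} {C : Set V} (hC : C.Nonempty) :
    ∃ v ∈ C, lo v = cliquePoint lo C :=
  (hC.image lo).csSup_mem (toFinite _)

namespace IsIntervalRep

variable [Finite V] {lo hi : V → ℕ} {C D : Set V} {v : V}

lemma cliquePoint_mem_Icc (hrep : IsIntervalRep G lo hi) (hC : G.IsClique C) (hv : v ∈ C) :
    cliquePoint lo C ∈ Icc (lo v) (hi v) := by
  obtain ⟨w, hwC, hw⟩ := exists_lo_eq_cliquePoint ⟨v, hv⟩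
  refine ⟨le_csSup (toFinite _).bddAbove (mem_image_of_mem lo hv), hw ▸ ?_⟩
  rcases eq_or_ne w v with rfl | hwv
  · exact hrep.1 w
  · obtain ⟨x, hxw, hxv⟩ := (hrep.2 w v hwv).1 (hC hwC hv hwv)
    exact hxw.1.trans hxv.2

lemma mem_of_cliquePoint_mem (hrep : IsIntervalRep G lo hi) (hD : IsMaxClique G D)
    (hv : cliquePoint lo D ∈ Icc (lo v) (hi v)) : v ∈ D :=
  hD.mem_of_forall_adj fun u hu hvu =>
    (hrep.2 v u hvu).2 ⟨_, hv, hrep.cliquePoint_mem_Icc hD.1 hu⟩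

lemma cliquePoint_injOn (hrep : IsIntervalRep G lo hi) :
    InjOn (cliquePoint lo) {C | IsMaxClique G C} := by
  intro C hC D hD h
  refine hC.eq_of_subset hD fun v hv => hrep.mem_of_cliquePoint_mem hD ?_
  exact h ▸ hrep.cliquePoint_mem_Icc hC.1 hv

lemma ncard_maxCliques_le [Nonempty V] (hrep : IsIntervalRep G lo hi) :
    {C | IsMaxClique G C}.ncard ≤ (⋃ v, Icc (lo v) (hi v)).ncard := by
  refine ncard_le_ncard_of_injOn _ (fun C hC => ?_) hrep.cliquePoint_injOn
    (finite_iUnion fun _ => finite_Icc _ _)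
  obtain ⟨v, hv⟩ := IsMaxClique.nonempty hC
  exact mem_iUnion_of_mem v (hrep.cliquePoint_mem_Icc hC.1 hv)

lemma cliquePoint_lt_of_leftmost [Nonempty V] (hrep : IsIntervalRep G lo hi) {k : ℕ}
    (hk : ∀ v, k ≤ lo v) (hM : IsMaxClique G {v | k ∈ Icc (lo v) (hi v)})
    (hC : IsMaxClique G C) (hne : C ≠ {v | k ∈ Icc (lo v) (hi v)}) :
    cliquePoint lo {v | k ∈ Icc (lo v) (hi v)} < cliquePoint lo C := by
  obtain ⟨w, hwM, hw⟩ := exists_lo_eq_cliquePoint hM.nonempty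
  refine hw ▸ hwM.1.trans_lt (lt_of_not_ge fun hCk => hne (hC.eq_of_subset hM fun u hu => ?_))
  exact ⟨(hrep.cliquePoint_mem_Icc hC.1 hu).1.trans hCk, (hk u).trans (hrep.1 u)⟩

end IsIntervalRep

namespace PrecM

variable {M C D E : Set V}

lemma isMaxClique_right (h : PrecM G M C D) : IsMaxClique G D := by
  induction h with
  | init C hC _ => exact hC
  | ext_left _ _ _ _ _ _ ih => exact ih
  | ext_right _ _ _ hD _ _ _ => exact hD

lemma isMaxClique_left (hM : IsMaxClique G M) (h : PrecM G M C D) : IsMaxClique G C := by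
  induction h with
  | init => exact hM
  | ext_left _ _ _ hC _ _ _ => exact hC
  | ext_right _ _ _ _ _ _ ih => exact ih

protected lemma irrefl (C : Set V) : ¬ PrecM G M C C := by
  rintro (⟨_, _, hne⟩ | ⟨_, _, _, _, _, ⟨v, hv, hvC⟩⟩ | ⟨_, _, _, _, _, ⟨v, hv, hvC⟩⟩)
  · exact hne rfl
  · exact hvC hv.2
  · exact hvC hv.2

lemma weak_linear (h : PrecM G M C E) (hD : IsMaxClique G D) :
    PrecM G M C D ∨ PrecM G M D E := by
  induction h generalizing D with
  | init E hE hne =>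
    by_cases hDM : D = M
    · subst hDM
      exact .inr (init E hE hne)
    · exact .inl (init D hD hDM)
  | ext_left Y Z X hY hXZ hwit ih =>
    obtain ⟨v, ⟨hvX, hvY⟩, hvZ⟩ := hwit
    rcases ih hD with hXD | hDZ
    · by_cases hvD : v ∈ D
      · exact .inr (ext_left D Z X hD hXZ ⟨v, ⟨hvX, hvD⟩, hvZ⟩)
      · exact .inl (ext_left Y D X hY hXD ⟨v, ⟨hvX, hvY⟩, hvD⟩)
    · exact .inr hDZ
  | ext_right Y Z X hZ hYX hwit ih =>
    obtain ⟨v, ⟨hvX, hvZ⟩, hvY⟩ := hwit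
    rcases ih hD with hYD | hDX
    · exact .inl hYD
    · by_cases hvD : v ∈ D
      · exact .inl (ext_right Y D X hD hYX ⟨v, ⟨hvX, hvD⟩, hvY⟩)
      · exact .inr (ext_right D Z X hZ hDX ⟨v, ⟨hvX, hvZ⟩, hvD⟩)

lemma trans_of_asymm (hasym : ∀ C D, PrecM G M C D → ¬ PrecM G M D C)
    (hCD : PrecM G M C D) (hDE : PrecM G M D E) : PrecM G M C E :=
  (hCD.weak_linear hDE.isMaxClique_right).resolve_right (hasym D E hDE)

lemma incomp_trans (hD : IsMaxClique G D) (hCD : ¬ PrecM G M C D ∧ ¬ PrecM G M D C)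
    (hDE : ¬ PrecM G M D E ∧ ¬ PrecM G M E D) : ¬ PrecM G M C E ∧ ¬ PrecM G M E C :=
  ⟨fun h => (h.weak_linear hD).elim hCD.1 hDE.1, fun h => (h.weak_linear hD).elim hDE.2 hCD.2⟩

lemma cliquePoint_lt [Finite V] {lo hi : V → ℕ} (hrep : IsIntervalRep G lo hi)
    (hM : IsMaxClique G M)
    (hleast : ∀ C, IsMaxClique G C → C ≠ M → cliquePoint lo M < cliquePoint lo C)
    (h : PrecM G M C D) : cliquePoint lo C < cliquePoint lo D := by
  induction h with
  | init C hC hne => exact hleast C hC hne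
  | ext_left C D E hC hED hwit ih =>
    obtain ⟨v, ⟨hvE, hvC⟩, hvD⟩ := hwit
    refine lt_of_not_ge fun hDC => hvD (hrep.mem_of_cliquePoint_mem hED.isMaxClique_right ?_)
    exact ⟨(hrep.cliquePoint_mem_Icc (hED.isMaxClique_left hM).1 hvE).1.trans ih.le,
      hDC.trans (hrep.cliquePoint_mem_Icc hC.1 hvC).2⟩
  | ext_right C D E hD hCE hwit ih =>
    obtain ⟨v, ⟨hvE, hvD⟩, hvC⟩ := hwit
    refine lt_of_not_ge fun hDC => hvC (hrep.mem_of_cliquePoint_mem (hCE.isMaxClique_left hM) ?_)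
    exact ⟨(hrep.cliquePoint_mem_Icc hD.1 hvD).1.trans hDC,
      ih.le.trans (hrep.cliquePoint_mem_Icc hCE.isMaxClique_right.1 hvE).2⟩

end PrecM

abbrev MaxCliques (G : SimpleGraph V) : Type := {C : Set V // IsMaxClique G C}

def IsConsecutive {n : ℕ} (e : MaxCliques G ≃ Fin n) : Prop :=
  ∀ C D E : MaxCliques G, e C ≤ e D → e D ≤ e E → ∀ v ∈ C.1, v ∈ E.1 → v ∈ D.1

section Enumeration

variable {n : ℕ}

noncomputable def firstPos (e : MaxCliques G ≃ Fin n) (v : V) : ℕ :=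
  sInf ((fun C => (e C : ℕ)) '' {C | v ∈ C.1})

noncomputable def lastPos (e : MaxCliques G ≃ Fin n) (v : V) : ℕ :=
  sSup ((fun C => (e C : ℕ)) '' {C | v ∈ C.1})

variable {e : MaxCliques G ≃ Fin n} {C : MaxCliques G} {v : V}

lemma firstPos_le (hv : v ∈ C.1) : firstPos e v ≤ e C :=
  Nat.sInf_le ⟨C, hv, rfl⟩

variable [Finite V]

lemma le_lastPos (hv : v ∈ C.1) : (e C : ℕ) ≤ lastPos e v :=
  le_csSup (toFinite _).bddAbove ⟨C, hv, rfl⟩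

lemma nonempty_positions (e : MaxCliques G ≃ Fin n) (v : V) :
    ((fun C => (e C : ℕ)) '' {C | v ∈ C.1}).Nonempty := by
  obtain ⟨C, hC, hv⟩ := exists_isMaxClique_mem (G := G) v
  exact ⟨_, ⟨C, hC⟩, hv, rfl⟩

lemma exists_eq_firstPos (e : MaxCliques G ≃ Fin n) (v : V) :
    ∃ C : MaxCliques G, v ∈ C.1 ∧ (e C : ℕ) = firstPos e v :=
  Nat.sInf_mem (nonempty_positions e v)

lemma exists_eq_lastPos (e : MaxCliques G ≃ Fin n) (v : V) :
    ∃ C : MaxCliques G, v ∈ C.1 ∧ (e C : ℕ) = lastPos e v :=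
  (nonempty_positions e v).csSup_mem (toFinite _)

lemma lastPos_lt (e : MaxCliques G ≃ Fin n) (v : V) : lastPos e v < n := by
  obtain ⟨C, -, hC⟩ := exists_eq_lastPos e v
  exact hC ▸ (e C).2

lemma iUnion_Icc_firstPos_lastPos [Nonempty V] (e : MaxCliques G ≃ Fin n) :
    ⋃ v, Icc (firstPos e v) (lastPos e v) = Iio n := by
  refine Subset.antisymm (iUnion_subset fun v x hx => hx.2.trans_lt (lastPos_lt e v))
    fun x hx => ?_
  set C := e.symm ⟨x, hx⟩
  obtain ⟨v, hv⟩ := C.2.nonempty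
  have hx : (e C : ℕ) = x := by simp [C]
  exact mem_iUnion_of_mem v (hx ▸ ⟨firstPos_le hv, le_lastPos hv⟩)

namespace IsConsecutive

lemma mem_iff (he : IsConsecutive e) :
    v ∈ C.1 ↔ (e C : ℕ) ∈ Icc (firstPos e v) (lastPos e v) := by
  refine ⟨fun hv => ⟨firstPos_le hv, le_lastPos hv⟩, fun ⟨h₀, h₁⟩ => ?_⟩
  obtain ⟨C₀, hv₀, he₀⟩ := exists_eq_firstPos e v
  obtain ⟨C₁, hv₁, he₁⟩ := exists_eq_lastPos e v
  exact he C₀ C C₁ (Fin.le_def.2 (he₀ ▸ h₀)) (Fin.le_def.2 (he₁ ▸ h₁)) v hv₀ hv₁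

lemma isIntervalRep (he : IsConsecutive e) : IsIntervalRep G (firstPos e) (lastPos e) := by
  refine ⟨fun v => ?_, fun u v huv => ⟨fun h => ?_, fun ⟨x, hxu, hxv⟩ => ?_⟩⟩
  · obtain ⟨C, hv, -⟩ := exists_eq_firstPos e v
    exact (firstPos_le hv).trans (le_lastPos hv)
  · obtain ⟨C, hC, hu, hv⟩ := h.exists_isMaxClique
    exact ⟨e ⟨C, hC⟩, he.mem_iff.1 hu, he.mem_iff.1 hv⟩
  · set C := e.symm ⟨x, hxu.2.trans_lt (lastPos_lt e u)⟩
    have hx : (e C : ℕ) = x := by simp [C]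
    exact C.2.1 (he.mem_iff.2 (hx ▸ hxu)) (he.mem_iff.2 (hx ▸ hxv)) huv

lemma isMinimalRep [Nonempty V] (he : IsConsecutive e) :
    IsMinimalRep G (firstPos e) (lastPos e) := by
  refine ⟨he.isIntervalRep, fun lo hi hrep => ?_⟩
  calc _ = n := by rw [iUnion_Icc_firstPos_lastPos, ncard_Iio_nat]
    _ = {C | IsMaxClique G C}.ncard := by
      rw [← Nat.card_coe_set_eq, ← Nat.card_fin n]
      exact (Nat.card_congr e).symm
    _ ≤ _ := hrep.ncard_maxCliques_le

lemma possibleEnd [Nonempty V] (he : IsConsecutive e) {M : Set V} (hM : IsMaxClique G M)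
    (h0 : (e ⟨M, hM⟩ : ℕ) = 0) : PossibleEnd G M :=
  ⟨_, _, he.isMinimalRep, 0, fun _ => Nat.zero_le _,
    ext fun _ => h0 ▸ he.mem_iff (C := ⟨M, hM⟩)⟩

end IsConsecutive

end Enumeration

lemma exists_equiv_fin_le_iff {α β : Type*} [Finite α] [LinearOrder β] {f : α → β}
    (hf : Function.Injective f) : ∃ n, ∃ e : α ≃ Fin n, ∀ a b, e a ≤ e b ↔ f a ≤ f b := by
  let := LinearOrder.lift' f hf
  have := Fintype.ofFinite α
  let e := (Fintype.orderIsoFinOfCardEq α rfl).symm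
  exact ⟨_, e.toEquiv, fun _ _ => e.le_iff_le⟩

noncomputable def precRank (G : SimpleGraph V) (M C : Set V) : ℕ := {X | PrecM G M X C}.ncard

section Ordering

variable [Finite V] {M C D E : Set V}

lemma precRank_lt_of_prec (hasym : ∀ C D, PrecM G M C D → ¬ PrecM G M D C)
    (h : PrecM G M C D) : precRank G M C < precRank G M D :=
  ncard_lt_ncard ((ssubset_iff_of_subset fun _ hX => hX.trans_of_asymm hasym h).2
    ⟨C, h, PrecM.irrefl C⟩)

lemma prec_of_precRank_lt (hC : IsMaxClique G C) (h : precRank G M C < precRank G M D) :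
    PrecM G M C D := by
  obtain ⟨X, hXD, hXC⟩ : ∃ X, PrecM G M X D ∧ ¬ PrecM G M X C := by
    by_contra! hsub
    exact (ncard_le_ncard hsub).not_gt h
  exact (hXD.weak_linear hC).resolve_left hXC

lemma mem_of_precRank_cliquePoint_le {lo hi : V → ℕ} (hrep : IsIntervalRep G lo hi)
    (hasym : ∀ C D, PrecM G M C D → ¬ PrecM G M D C)
    (hC : IsMaxClique G C) (hD : IsMaxClique G D) (hE : IsMaxClique G E)
    (hCD : toLex (precRank G M C, cliquePoint lo C) ≤ toLex (precRank G M D, cliquePoint lo D))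
    (hDE : toLex (precRank G M D, cliquePoint lo D) ≤ toLex (precRank G M E, cliquePoint lo E))
    {v : V} (hvC : v ∈ C) (hvE : v ∈ E) : v ∈ D := by
  by_contra hvD
  rw [Prod.Lex.toLex_le_toLex] at hCD hDE
  have hrankDE : precRank G M D ≤ precRank G M E := hDE.elim le_of_lt fun h => h.1.le
  rcases hCD with hCD | ⟨hCD, hpCD⟩
  · have hED := PrecM.ext_left E D C hE (prec_of_precRank_lt hC hCD) ⟨v, ⟨hvC, hvE⟩, hvD⟩
    exact (precRank_lt_of_prec hasym hED).not_ge hrankDE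
  rcases hDE with hDE | ⟨-, hpDE⟩
  · have hDC := PrecM.ext_right D C E hC (prec_of_precRank_lt hD hDE) ⟨v, ⟨hvE, hvC⟩, hvD⟩
    exact (precRank_lt_of_prec hasym hDC).ne hCD.symm
  · exact hvD (hrep.mem_of_cliquePoint_mem hD ⟨(hrep.cliquePoint_mem_Icc hC.1 hvC).1.trans hpCD,
      hpDE.trans (hrep.cliquePoint_mem_Icc hE.1 hvE).2⟩)

lemma exists_isConsecutive_of_asymm (hG : IsIntervalGraph G) (hM : IsMaxClique G M)
    (hasym : ∀ C D, PrecM G M C D → ¬ PrecM G M D C) :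
    ∃ n, ∃ e : MaxCliques G ≃ Fin n, IsConsecutive e ∧ (e ⟨M, hM⟩ : ℕ) = 0 := by
  obtain ⟨lo, hi, hrep⟩ := hG
  let key : MaxCliques G → ℕ ×ₗ ℕ := fun C => toLex (precRank G M C, cliquePoint lo C)
  have hkey : Function.Injective key := fun C D h =>
    Subtype.ext (hrep.cliquePoint_injOn C.2 D.2 (congrArg (fun p => (ofLex p).2) h))
  obtain ⟨n, e, he⟩ := exists_equiv_fin_le_iff hkey
  have hMfirst : ∀ C, e ⟨M, hM⟩ ≤ e C := by
    intro C
    rw [he]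
    by_cases hCM : C.1 = M
    · exact (congrArg key (Subtype.ext hCM)).ge
    · exact Prod.Lex.toLex_le_toLex.2
        (.inl (precRank_lt_of_prec hasym (PrecM.init C.1 C.2 hCM)))
  refine ⟨n, e, fun C D E hCD hDE v hvC hvE => ?_, ?_⟩
  · rw [he] at hCD hDE
    exact mem_of_precRank_cliquePoint_le hrep hasym C.2 D.2 E.2 hCD hDE hvC hvE
  · simpa [Fin.le_def] using hMfirst (e.symm ⟨0, (e ⟨M, hM⟩).pos⟩)

end Ordering

section Ends

variable [Finite V] {M : Set V}

lemma possibleEnd_of_asymm [Nonempty V] (hG : IsIntervalGraph G) (hM : IsMaxClique G M)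
    (hasym : ∀ C D, PrecM G M C D → ¬ PrecM G M D C) : PossibleEnd G M := by
  obtain ⟨n, e, he, h0⟩ := exists_isConsecutive_of_asymm hG hM hasym
  exact he.possibleEnd hM h0

lemma asymm_of_possibleEnd [Nonempty V] (hM : IsMaxClique G M) (h : PossibleEnd G M) :
    ∀ C D, PrecM G M C D → ¬ PrecM G M D C := by
  obtain ⟨lo, hi, ⟨hrep, -⟩, k, hk, rfl⟩ := h
  have hlt {C D : Set V} (h : PrecM G _ C D) : cliquePoint lo C < cliquePoint lo D :=
    h.cliquePoint_lt hrep hM fun _ => hrep.cliquePoint_lt_of_leftmost hk hM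
  exact fun C D hCD hDC => (hlt hCD).asymm (hlt hDC)

end Ends

theorem precM_asymm_iff_strictWeakOrder_iff_possibleEnd_general {V : Type} [Fintype V]
    (G : SimpleGraph V) (hG : IsIntervalGraph G) (hconn : G.Connected)
    (M : Set V) (hM : IsMaxClique G M) :
    ((∀ C D : Set V, PrecM G M C D → ¬ PrecM G M D C) ↔
      ((∀ C : Set V, ¬ PrecM G M C C) ∧
       (∀ C D E : Set V, PrecM G M C D → PrecM G M D E → PrecM G M C E) ∧
       (∀ C D E : Set V, IsMaxClique G C → IsMaxClique G D → IsMaxClique G E →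
         (¬ PrecM G M C D ∧ ¬ PrecM G M D C) →
         (¬ PrecM G M D E ∧ ¬ PrecM G M E D) →
         (¬ PrecM G M C E ∧ ¬ PrecM G M E C)))) ∧
    ((∀ C D : Set V, PrecM G M C D → ¬ PrecM G M D C) ↔ PossibleEnd G M) := by
  have : Nonempty V := hconn.nonempty
  refine ⟨⟨fun hasym => ⟨PrecM.irrefl, fun _ _ _ => PrecM.trans_of_asymm hasym, ?_⟩, ?_⟩,
    possibleEnd_of_asymm hG hM, asymm_of_possibleEnd hM⟩
  · exact fun _ _ _ _ hD _ => PrecM.incomp_trans hD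
  · exact fun ⟨hirrefl, htrans, _⟩ C D hCD hDC => hirrefl C (htrans C D C hCD hDC)

/-- Let `G` be a connected interval graph without an apex and `M` a
max clique of `G`.  The following are equivalent: (1) `≺_M` is asymmetric; (2) `≺_M`
is a strict weak order (irreflexive, transitive, and `≺_M`-incomparability is an
equivalence relation on the max cliques of `G`); (3) `M` is a possible end of `G`. -/
theorem precM_asymm_iff_strictWeakOrder_iff_possibleEnd {V : Type} [Fintype V]
    (G : SimpleGraph V) (hG : IsIntervalGraph G) (hconn : G.Connected)
    (hapex : ¬ HasApex G) (M : Set V) (hM : IsMaxClique G M) :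
    ((∀ C D : Set V, PrecM G M C D → ¬ PrecM G M D C) ↔
      ((∀ C : Set V, ¬ PrecM G M C C) ∧
       (∀ C D E : Set V, PrecM G M C D → PrecM G M D E → PrecM G M C E) ∧
       (∀ C D E : Set V, IsMaxClique G C → IsMaxClique G D → IsMaxClique G E →
         (¬ PrecM G M C D ∧ ¬ PrecM G M D C) →
         (¬ PrecM G M D E ∧ ¬ PrecM G M E D) →
         (¬ PrecM G M C E ∧ ¬ PrecM G M E C)))) ∧
    ((∀ C D : Set V, PrecM G M C D → ¬ PrecM G M D C) ↔ PossibleEnd G M) :=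
  precM_asymm_iff_strictWeakOrder_iff_possibleEnd_general G hG hconn M hM
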